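/- arXiv:1201.3816 — 2 statements merged into one kernel-verified Lean document; each statement's English description precedes it below -/
import Mathlib

section
/- Let $q \in \mathbb{N}$, $\mu > \rho$ where $\rho = q + 1/2$ (real case $d=1$), and $v$ a real $q\times q$ matrix with $v v^*/\mu$ having operator norm less than 1 (i.e. $v \in \sqrt{\mu}\cdot D_q$). Then $0 \le e^{-\langle v,v\rangle} - \det(I - \tfrac{1}{\mu} v v^*)^\mu \le \tfrac{1}{\mu}\,\mathrm{tr}((vv^*)^2)\, e^{-\langle v,v\rangle}$. -/
/-!
Diagonalise `v vᵀ`: its eigenvalues `λᵢ` lie in `[0, μ)`, and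
`det (1 - v vᵀ / μ) ^ μ = ∏ (1 - λᵢ / μ) ^ μ`, `⟨v, v⟩ = ∑ λᵢ`, `tr ((v vᵀ)²) = ∑ λᵢ²`.
The upper bound is then `1 - t ≤ e⁻ᵗ` factorwise. For the lower bound, Bernoulli's inequality
`(1 - t²) ^ μ ≥ 1 - μ t²` together with `1 - t² ≤ (1 - t) eᵗ` gives
`e^{-λ} (1 - λ² / μ) ≤ (1 - λ / μ) ^ μ` for `μ ≥ 1`, and the Weierstrass product inequality
`∏ (1 - aᵢ) ≥ 1 - ∑ aᵢ` multiplies these factors.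
-/

theorem Finset.one_sub_sum_le_prod_one_sub {ι R : Type*} [CommRing R] [LinearOrder R]
    [IsStrictOrderedRing R] (s : Finset ι) {a : ι → R} (h0 : ∀ i ∈ s, 0 ≤ a i)
    (h1 : ∀ i ∈ s, a i ≤ 1) : 1 - ∑ i ∈ s, a i ≤ ∏ i ∈ s, (1 - a i) := by
  induction s using Finset.cons_induction with
  | empty => simp
  | cons j s hj ih =>
    simp only [Finset.mem_cons, forall_eq_or_imp] at h0 h1
    rw [Finset.sum_cons, Finset.prod_cons]
    have hs : 0 ≤ ∑ i ∈ s, a i := Finset.sum_nonneg h0.2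
    calc 1 - (a j + ∑ i ∈ s, a i) ≤ (1 - a j) * (1 - ∑ i ∈ s, a i) := by nlinarith [h0.1]
      _ ≤ (1 - a j) * ∏ i ∈ s, (1 - a i) :=
        mul_le_mul_of_nonneg_left (ih h0.2 h1.2) (sub_nonneg.2 h1.1)

namespace Real

theorem one_sub_div_rpow_le_exp_neg {x μ : ℝ} (hμ : 0 < μ) (hx : x ≤ μ) :
    (1 - x / μ) ^ μ ≤ exp (-x) := by
  calc (1 - x / μ) ^ μ ≤ exp (-(x / μ)) ^ μ := by
        gcongr
        · exact sub_nonneg.2 ((div_le_one hμ).2 hx)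
        · linarith [add_one_le_exp (-(x / μ))]
    _ = exp (-x) := by rw [← exp_mul]; field_simp

theorem exp_neg_mul_one_sub_sq_div_le_one_sub_div_rpow {x μ : ℝ} (hμ : 1 ≤ μ) (hx : 0 ≤ x)
    (hxμ : x ≤ μ) : exp (-x) * (1 - x ^ 2 / μ) ≤ (1 - x / μ) ^ μ := by
  have hμ0 : 0 < μ := one_pos.trans_le hμ
  set t := x / μ with ht
  have ht0 : 0 ≤ t := div_nonneg hx hμ0.le
  have ht1 : t ≤ 1 := (div_le_one hμ0).2 hxμ
  have bernoulli : 1 - μ * t ^ 2 ≤ (1 - t ^ 2) ^ μ := by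
    simpa [sub_eq_add_neg] using one_add_mul_self_le_rpow_one_add (s := -t ^ 2) (by nlinarith) hμ
  -- `1 - t² = (1 - t) (1 + t) ≤ (1 - t) eᵗ`
  have hfactor : (1 - t ^ 2) ^ μ ≤ (1 - t) ^ μ * exp x := by
    calc (1 - t ^ 2) ^ μ ≤ ((1 - t) * exp t) ^ μ := by
          gcongr
          · nlinarith
          · nlinarith [add_one_le_exp t]
      _ = (1 - t) ^ μ * exp x := by
          rw [mul_rpow (by linarith) (exp_pos t).le, ← exp_mul, ht, div_mul_cancel₀ x hμ0.ne']
  have hμt : μ * t ^ 2 = x ^ 2 / μ := by rw [ht]; field_simp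
  calc exp (-x) * (1 - x ^ 2 / μ) ≤ exp (-x) * ((1 - t) ^ μ * exp x) := by
        rw [← hμt]; gcongr; exact bernoulli.trans hfactor
    _ = (1 - t) ^ μ := by rw [exp_neg]; field_simp

section Finite

variable {ι : Type*} [Fintype ι] {x : ι → ℝ} {μ : ℝ}

theorem prod_one_sub_div_rpow_le_exp_neg_sum (hμ : 0 < μ) (hx : ∀ i, x i ≤ μ) :
    ∏ i, (1 - x i / μ) ^ μ ≤ exp (-∑ i, x i) := by
  rw [← Finset.sum_neg_distrib, exp_sum]
  exact Finset.prod_le_prod (fun i _ ↦ rpow_nonneg (sub_nonneg.2 ((div_le_one hμ).2 (hx i))) μ)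
    fun i _ ↦ one_sub_div_rpow_le_exp_neg hμ (hx i)

theorem exp_neg_sum_mul_one_sub_sum_sq_div_le_prod_one_sub_div_rpow (hμ : 1 ≤ μ)
    (hx0 : ∀ i, 0 ≤ x i) (hxμ : ∀ i, x i ≤ μ) :
    exp (-∑ i, x i) * (1 - (∑ i, x i ^ 2) / μ) ≤ ∏ i, (1 - x i / μ) ^ μ := by
  have hμ0 : 0 < μ := one_pos.trans_le hμ
  have hprod_nonneg : 0 ≤ ∏ i, (1 - x i / μ) ^ μ :=
    Finset.prod_nonneg fun i _ ↦ rpow_nonneg (sub_nonneg.2 ((div_le_one hμ0).2 (hxμ i))) μ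
  by_cases hS : (∑ i, x i ^ 2) / μ ≤ 1
  swap
  · exact le_trans (mul_nonpos_of_nonneg_of_nonpos (exp_pos _).le (by linarith)) hprod_nonneg
  have ha0 : ∀ i, 0 ≤ x i ^ 2 / μ := fun i ↦ by positivity
  have ha1 : ∀ i, x i ^ 2 / μ ≤ 1 := fun i ↦ le_trans (by
    rw [Finset.sum_div]; exact Finset.single_le_sum (fun j _ ↦ ha0 j) (Finset.mem_univ i)) hS
  calc exp (-∑ i, x i) * (1 - (∑ i, x i ^ 2) / μ)
      ≤ exp (-∑ i, x i) * ∏ i, (1 - x i ^ 2 / μ) := by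
        rw [Finset.sum_div]
        gcongr
        exact Finset.univ.one_sub_sum_le_prod_one_sub (fun i _ ↦ ha0 i) fun i _ ↦ ha1 i
    _ = ∏ i, exp (-x i) * (1 - x i ^ 2 / μ) := by
        rw [← Finset.sum_neg_distrib, exp_sum, Finset.prod_mul_distrib]
    _ ≤ ∏ i, (1 - x i / μ) ^ μ :=
        Finset.prod_le_prod (fun i _ ↦ mul_nonneg (exp_pos _).le (sub_nonneg.2 (ha1 i)))
          fun i _ ↦ exp_neg_mul_one_sub_sq_div_le_one_sub_div_rpow hμ (hx0 i) (hxμ i)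

theorem exp_neg_sum_sub_prod_one_sub_div_rpow_bounds (hμ : 1 ≤ μ) (hx0 : ∀ i, 0 ≤ x i)
    (hxμ : ∀ i, x i ≤ μ) :
    0 ≤ exp (-∑ i, x i) - (∏ i, (1 - x i / μ)) ^ μ ∧
      exp (-∑ i, x i) - (∏ i, (1 - x i / μ)) ^ μ
        ≤ μ⁻¹ * (∑ i, x i ^ 2) * exp (-∑ i, x i) := by
  have hμ0 : 0 < μ := one_pos.trans_le hμ
  rw [← finsetProd_rpow _ _ fun i _ ↦ sub_nonneg.2 ((div_le_one hμ0).2 (hxμ i))]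
  have hupper := prod_one_sub_div_rpow_le_exp_neg_sum hμ0 hxμ
  have hlower := exp_neg_sum_mul_one_sub_sum_sq_div_le_prod_one_sub_div_rpow hμ hx0 hxμ
  rw [mul_one_sub, mul_div, div_eq_inv_mul] at hlower
  constructor <;> linarith

end Finite

end Real

namespace Matrix.IsHermitian

open scoped ComplexOrder

variable {n 𝕜 : Type*} [Fintype n] [DecidableEq n] [RCLike 𝕜] {A : Matrix n n 𝕜}

lemma det_cfc (hA : A.IsHermitian) (f : ℝ → ℝ) :
    (cfc f A).det = ∏ i, (f (hA.eigenvalues i) : 𝕜) := by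
  rw [hA.cfc_eq, IsHermitian.cfc, Unitary.conjStarAlgAut_apply, det_mul_right_comm,
    Unitary.mul_star_self_of_mem hA.eigenvectorUnitary.2, one_mul, det_diagonal]
  rfl

lemma trace_cfc (hA : A.IsHermitian) (f : ℝ → ℝ) :
    (cfc f A).trace = ∑ i, (f (hA.eigenvalues i) : 𝕜) := by
  rw [hA.cfc_eq, IsHermitian.cfc, Unitary.conjStarAlgAut_apply, trace_mul_cycle,
    Unitary.coe_star_mul_self, one_mul, trace_diagonal]
  rfl

lemma pos_of_posDef_cfc (hA : A.IsHermitian) {f : ℝ → ℝ} (hf : (cfc f A).PosDef) (i : n) :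
    0 < f (hA.eigenvalues i) := by
  have hmem : f (hA.eigenvalues i) ∈ spectrum ℝ (cfc f A) := by
    rw [cfc_map_spectrum f A hA.isSelfAdjoint (A.finite_real_spectrum.continuousOn f)]
    exact Set.mem_image_of_mem f (hA.eigenvalues_mem_spectrum_real i)
  rw [hf.1.spectrum_real_eq_range_eigenvalues] at hmem
  obtain ⟨j, hj⟩ := hmem
  exact hj ▸ hf.eigenvalues_pos j

end Matrix.IsHermitian

open Matrix in
/-- The exponential inequality: for `μ > ρ = q + 1/2` and `v ∈ √μ·D_q` (i.e.
`I - vv*/μ` positive definite),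
`0 ≤ e^{-⟨v,v⟩} - det(I - vv*/μ)^μ ≤ (1/μ) tr((vv*)²) e^{-⟨v,v⟩}`. -/
theorem exp_det_inequality (q : ℕ) (μ : ℝ) (hμ : μ > q + 1 / 2)
    (v : Matrix (Fin q) (Fin q) ℝ)
    (hv : ((1 : Matrix (Fin q) (Fin q) ℝ) - μ⁻¹ • (v * vᵀ)).PosDef) :
    0 ≤ Real.exp (-(vᵀ * v).trace)
        - ((1 : Matrix (Fin q) (Fin q) ℝ) - μ⁻¹ • (v * vᵀ)).det ^ μ ∧
      Real.exp (-(vᵀ * v).trace)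
          - ((1 : Matrix (Fin q) (Fin q) ℝ) - μ⁻¹ • (v * vᵀ)).det ^ μ
        ≤ μ⁻¹ * ((v * vᵀ) * (v * vᵀ)).trace * Real.exp (-(vᵀ * v).trace) := by
  obtain rfl | hq := q.eq_zero_or_pos
  · simp
  have hμ1 : 1 ≤ μ := by
    have : (1 : ℝ) ≤ q := by exact_mod_cast hq
    linarith
  have hA : (v * vᵀ).IsHermitian := by simpa using isHermitian_mul_conjTranspose_self v
  have hcfc : 1 - μ⁻¹ • (v * vᵀ) = cfc (fun x ↦ 1 - x / μ) (v * vᵀ) := by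
    simp_rw [div_eq_inv_mul]
    rw [cfc_sub .., cfc_const_one .., cfc_const_mul_id ..]
  have htr : (vᵀ * v).trace = ∑ i, hA.eigenvalues i := by
    rw [trace_mul_comm]; simpa using hA.trace_eq_sum_eigenvalues
  have htr_sq : (v * vᵀ * (v * vᵀ)).trace = ∑ i, hA.eigenvalues i ^ 2 := by
    rw [← sq, ← cfc_pow_id (R := ℝ) .., hA.trace_cfc]; rfl
  have hlt : ∀ i, hA.eigenvalues i < μ := fun i ↦ by
    have := hA.pos_of_posDef_cfc (hcfc ▸ hv) i
    rwa [sub_pos, div_lt_one (by linarith)] at this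
  rw [hcfc, hA.det_cfc, htr, htr_sq]
  simp only [RCLike.ofReal_real_eq_id, id]
  exact Real.exp_neg_sum_sub_prod_one_sub_div_rpow_bounds hμ1
    (posSemidef_self_mul_conjTranspose v).eigenvalues_nonneg fun i ↦ (hlt i).le
end

section
/- Fix $\mu \ge 3$ and define for $r,s \ge 0$ the Kingman–Bessel convolution of point measures on $[0,\infty)$ by $(\delta_r *_\mu \delta_s)(f) = \frac{1}{\kappa_\mu}\int_{-1}^1 f(\sqrt{r^2 + s^2 + 2rsv})(1-v^2)^{\mu - 3/2}\,dv$ with $\kappa_\mu = \int_{-1}^1 (1-v^2)^{\mu-3/2} dv$. Then there is a constant $C>0$, independent of $\mu, r, s$, such that for every function $f : [0,\infty) \to \mathbb{C}$ satisfying $|f(\sqrt{x}) - f(\sqrt{y})| \le L|x - y|$ for all $x,y \ge 0$, one has $|(\delta_r *_\mu \delta_s)(f) - f(\sqrt{r^2+s^2})| \le C L\, r s/\sqrt{\mu}$. -/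
open MeasureTheory Filter

/-- The Kingman–Bessel convolution normalization constant `κ_μ`. -/
noncomputable def kappa (μ : ℝ) : ℝ := ∫ v in Set.Icc (-1 : ℝ) 1, (1 - v ^ 2) ^ (μ - 3 / 2)

/-!
The difference `(δ_r *_μ δ_s)(f) - f(√(r²+s²))` is the weighted average over `v` of
`f(√(r²+s²+2rsv)) - f(√(r²+s²))`, which root-Lipschitzness bounds by `2Lrs|v|`. The first
absolute moment of the weight is exactly `∫|v|(1-v²)^α = 1/(α+1)`, while Bernoulli's inequality
keeps the weight above `1/2` on `|v| ≤ 1/(2√μ)`, so `κ_μ ≥ 1/(2√μ)`. Together the error is at most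
`2√μ · 2Lrs/(μ - 1/2) ≤ 5Lrs/√μ`.
-/

open Set

theorem continuous_one_sub_sq_rpow {α : ℝ} (hα : 0 ≤ α) :
    Continuous fun v : ℝ => (1 - v ^ 2) ^ α :=
  continuous_iff_continuousAt.2 fun _ => ContinuousAt.rpow_const (by fun_prop) (Or.inr hα)

theorem half_le_one_sub_sq_rpow {α v : ℝ} (hα : 1 ≤ α) (hv : α * v ^ 2 ≤ 1 / 2) :
    1 / 2 ≤ (1 - v ^ 2) ^ α := by
  have hv1 : v ^ 2 ≤ 1 := by nlinarith [sq_nonneg v]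
  calc (1 / 2 : ℝ) ≤ 1 + α * -v ^ 2 := by linarith
    _ ≤ (1 + -v ^ 2) ^ α := one_add_mul_self_le_rpow_one_add (by linarith) hα
    _ = (1 - v ^ 2) ^ α := by rw [← sub_eq_add_neg]

theorem le_integral_one_sub_sq_rpow {α b : ℝ} (hα : 1 ≤ α) (hb : 0 ≤ b)
    (hαb : α * b ^ 2 ≤ 1 / 2) : b ≤ ∫ v in Icc (-1 : ℝ) 1, (1 - v ^ 2) ^ α := by
  have hb1 : b ≤ 1 := by nlinarith
  have hw := continuous_one_sub_sq_rpow (zero_le_one.trans hα)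
  calc b = ∫ _ in Icc (-b) b, (1 / 2 : ℝ) := by
        rw [setIntegral_const, Real.volume_real_Icc_of_le (by linarith), smul_eq_mul]; ring
    _ ≤ ∫ v in Icc (-b) b, (1 - v ^ 2) ^ α := by
        refine setIntegral_mono_on (integrableOn_const measure_Icc_lt_top.ne)
          hw.integrableOn_Icc measurableSet_Icc fun v hv => half_le_one_sub_sq_rpow hα ?_
        have : v ^ 2 ≤ b ^ 2 := sq_le_sq' hv.1 hv.2
        nlinarith
    _ ≤ ∫ v in Icc (-1 : ℝ) 1, (1 - v ^ 2) ^ α := by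
        refine setIntegral_mono_set hw.integrableOn_Icc ?_
          (Icc_subset_Icc (by linarith) hb1).eventuallyLE
        filter_upwards [ae_restrict_mem measurableSet_Icc] with v hv
        exact Real.rpow_nonneg (by nlinarith [hv.1, hv.2]) _

theorem inv_two_mul_sqrt_le_kappa {μ : ℝ} (hμ : 5 / 2 ≤ μ) : (2 * √μ)⁻¹ ≤ kappa μ := by
  refine le_integral_one_sub_sq_rpow (by linarith) (by positivity) ?_
  rw [inv_pow, mul_pow, Real.sq_sqrt (by linarith), ← div_eq_mul_inv, div_le_iff₀ (by positivity)]
  linarith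

theorem integral_abs_mul_one_sub_sq_rpow {α : ℝ} (hα : 0 ≤ α) :
    ∫ v in Icc (-1 : ℝ) 1, |v| * (1 - v ^ 2) ^ α = (α + 1)⁻¹ := by
  have hw := continuous_one_sub_sq_rpow hα
  have hF : ∀ v : ℝ, HasDerivAt (fun v : ℝ => -(1 - v ^ 2) ^ (α + 1) / (2 * (α + 1)))
      (v * (1 - v ^ 2) ^ α) v := by
    intro v
    have := ((Real.hasDerivAt_rpow_const (p := α + 1) (Or.inr (by linarith))).comp v
      ((hasDerivAt_pow 2 v).const_sub 1)).neg.div_const (2 * (α + 1))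
    refine this.congr_deriv ?_
    rw [add_sub_cancel_right]
    field_simp
    push_cast
    ring
  have hhalf : ∫ v in (0 : ℝ)..1, |v| * (1 - v ^ 2) ^ α = (2 * (α + 1))⁻¹ := by
    rw [intervalIntegral.integral_congr (g := fun v => v * (1 - v ^ 2) ^ α) fun v hv => by
      rw [uIcc_of_le zero_le_one] at hv; simp only [abs_of_nonneg hv.1]]
    rw [intervalIntegral.integral_eq_sub_of_hasDerivAt (fun v _ => hF v)
      ((continuous_id.mul hw).intervalIntegrable 0 1)]
    norm_num [Real.zero_rpow (by linarith : α + 1 ≠ 0)]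
    field_simp
  have hint : ∀ a b : ℝ, IntervalIntegrable (fun v : ℝ => |v| * (1 - v ^ 2) ^ α) volume a b :=
    fun a b => (continuous_abs.mul hw).intervalIntegrable a b
  have hsymm : ∫ v in (-1 : ℝ)..0, |v| * (1 - v ^ 2) ^ α
      = ∫ v in (0 : ℝ)..1, |v| * (1 - v ^ 2) ^ α := by
    have := intervalIntegral.integral_comp_neg (a := 0) (b := 1)
      (fun v : ℝ => |v| * (1 - v ^ 2) ^ α)
    simp only [abs_neg, neg_sq, neg_zero] at this
    exact this.symm
  rw [integral_Icc_eq_integral_Ioc, ← intervalIntegral.integral_of_le (by norm_num),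
    ← intervalIntegral.integral_add_adjacent_intervals (hint (-1) 0) (hint 0 1), hsymm, hhalf]
  field_simp
  ring

theorem norm_inv_integral_smul_integral_sub_le {X E : Type*} [MeasurableSpace X] {ν : Measure X}
    [NormedAddCommGroup E] [NormedSpace ℝ E] [CompleteSpace E] {w d : X → ℝ} {h : X → E} (c : E)
    (hw0 : ∀ᵐ x ∂ν, 0 ≤ w x) (hw : Integrable w ν) (hwh : Integrable (fun x => w x • h x) ν)
    (hwd : Integrable (fun x => w x * d x) ν) (hpos : 0 < ∫ x, w x ∂ν)
    (hd : ∀ᵐ x ∂ν, ‖h x - c‖ ≤ d x) :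
    ‖(∫ x, w x ∂ν)⁻¹ • (∫ x, w x • h x ∂ν) - c‖ ≤ (∫ x, w x ∂ν)⁻¹ * ∫ x, w x * d x ∂ν := by
  have hdiff : (∫ x, w x ∂ν)⁻¹ • (∫ x, w x • h x ∂ν) - c
      = (∫ x, w x ∂ν)⁻¹ • ∫ x, w x • (h x - c) ∂ν := by
    simp_rw [smul_sub]
    rw [integral_sub hwh (hw.smul_const c), integral_smul_const, smul_sub, smul_smul,
      inv_mul_cancel₀ hpos.ne', one_smul]
  rw [hdiff, norm_smul, Real.norm_of_nonneg (inv_nonneg.2 hpos.le)]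
  gcongr
  refine norm_integral_le_of_norm_le hwd ?_
  filter_upwards [hw0, hd] with x hx0 hx
  rw [norm_smul, Real.norm_of_nonneg hx0]
  exact mul_le_mul_of_nonneg_left hx hx0

theorem norm_inv_kappa_smul_integral_sub_le {E : Type*} [NormedAddCommGroup E]
    [NormedSpace ℝ E] [CompleteSpace E] {μ K : ℝ} (hμ : 5 / 2 ≤ μ) (hK : 0 ≤ K) {h : ℝ → E}
    (c : E) (hh : ContinuousOn h (Icc (-1) 1)) (hdev : ∀ v ∈ Icc (-1 : ℝ) 1, ‖h v - c‖ ≤ K * |v|) :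
    ‖(kappa μ)⁻¹ • (∫ v in Icc (-1 : ℝ) 1, (1 - v ^ 2) ^ (μ - 3 / 2) • h v) - c‖
      ≤ 5 / 2 * K / √μ := by
  have hw := continuous_one_sub_sq_rpow (by linarith : (0 : ℝ) ≤ μ - 3 / 2)
  have hκ : (2 * √μ)⁻¹ ≤ kappa μ := inv_two_mul_sqrt_le_kappa hμ
  have hκ0 : 0 < kappa μ := lt_of_lt_of_le (by positivity) hκ
  have hμ' : 0 < μ - 1 / 2 := by linarith
  calc _ ≤ (kappa μ)⁻¹ * ∫ v in Icc (-1 : ℝ) 1, (1 - v ^ 2) ^ (μ - 3 / 2) * (K * |v|) := by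
        refine norm_inv_integral_smul_integral_sub_le c ?_ hw.integrableOn_Icc
          (hw.continuousOn.smul hh).integrableOn_Icc (hw.mul (by fun_prop)).integrableOn_Icc
          hκ0 ((ae_restrict_iff' measurableSet_Icc).2 (Eventually.of_forall hdev))
        exact (ae_restrict_iff' measurableSet_Icc).2 (Eventually.of_forall fun v hv =>
          Real.rpow_nonneg (by nlinarith [hv.1, hv.2]) _)
    _ = (kappa μ)⁻¹ * K * (μ - 1 / 2)⁻¹ := by
        simp_rw [mul_left_comm _ K, mul_comm _ |_|]
        rw [integral_const_mul, integral_abs_mul_one_sub_sq_rpow (by linarith)]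
        ring
    _ ≤ 2 * √μ * K * (μ - 1 / 2)⁻¹ := by
        gcongr
        exact inv_le_of_inv_le₀ (by positivity) hκ
    _ = 2 * μ / (μ - 1 / 2) * K / √μ := by
        have : 0 < √μ := by positivity
        field_simp
        rw [Real.sq_sqrt (by linarith)]
        ring
    _ ≤ 5 / 2 * K / √μ := by
        gcongr ?_ * _ / _
        rw [div_le_iff₀ hμ']
        linarith

theorem continuousOn_comp_sqrt_of_root_lipschitz {E : Type*} [NormedAddCommGroup E]
    {f : ℝ → E} {L : ℝ}
    (hf : ∀ x y : ℝ, 0 ≤ x → 0 ≤ y → ‖f √x - f √y‖ ≤ L * |x - y|) :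
    ContinuousOn (fun x => f √x) (Ici 0) := by
  refine (LipschitzOnWith.of_dist_le_mul (K := L.toNNReal) fun x hx y hy => ?_).continuousOn
  rw [dist_eq_norm, Real.dist_eq]
  exact (hf x y hx hy).trans (by gcongr; exact Real.le_coe_toNNReal L)

/-- Quantitative comparison of `(δ_r *_μ δ_s)(f)` with `f(√(r²+s²))` for
root-Lipschitz functions `f`: the error is at most `C L r s / √μ`. -/
theorem point_convolution_estimate :
    ∃ C > (0 : ℝ), ∀ μ : ℝ, μ ≥ 3 → ∀ r s : ℝ, 0 ≤ r → 0 ≤ s →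
      ∀ (f : ℝ → ℂ) (L : ℝ),
        (∀ x y : ℝ, 0 ≤ x → 0 ≤ y →
          ‖f (Real.sqrt x) - f (Real.sqrt y)‖ ≤ L * |x - y|) →
        ‖(kappa μ)⁻¹ • (∫ v in Set.Icc (-1 : ℝ) 1,
              ((1 - v ^ 2) ^ (μ - 3 / 2) : ℝ) • f (Real.sqrt (r ^ 2 + s ^ 2 + 2 * r * s * v)))
            - f (Real.sqrt (r ^ 2 + s ^ 2))‖
          ≤ C * L * r * s / Real.sqrt μ := by
  refine ⟨5, by norm_num, fun μ hμ r s hr hs f L hf => ?_⟩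
  have hL : 0 ≤ L := by simpa using (norm_nonneg _).trans (hf 0 1 le_rfl zero_le_one)
  have harg : MapsTo (fun v => r ^ 2 + s ^ 2 + 2 * r * s * v) (Icc (-1) 1) (Ici 0) :=
    fun v hv => show (0 : ℝ) ≤ _ by
      nlinarith [sq_nonneg (r - s), mul_nonneg (mul_nonneg hr hs) (neg_le_iff_add_nonneg.1 hv.1)]
  have hdev : ∀ v ∈ Icc (-1 : ℝ) 1, ‖f √(r ^ 2 + s ^ 2 + 2 * r * s * v) - f √(r ^ 2 + s ^ 2)‖
      ≤ 2 * L * r * s * |v| := fun v hv => by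
    refine (hf _ _ (harg hv) (by positivity)).trans_eq ?_
    rw [add_sub_cancel_left, abs_mul, abs_of_nonneg (by positivity : 0 ≤ 2 * r * s)]
    ring
  calc _ ≤ 5 / 2 * (2 * L * r * s) / √μ :=
        norm_inv_kappa_smul_integral_sub_le (by linarith) (by positivity) _
          ((continuousOn_comp_sqrt_of_root_lipschitz hf).comp (by fun_prop) harg) hdev
    _ = 5 * L * r * s / √μ := by ring
end
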